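/- Let G be a group, let j : K → L be a Dwyer G-map of G-posets, and let f : K → X be a G-equivariant monotone map of G-posets. Let Y be the explicit pushout of j along f, equipped with the G-action induced by the actions on L \ K (which is a G-stable subset of L) and on X; then Y is a G-poset. Moreover, for every subgroup H ≤ G, the square obtained by restricting the pushout square to H-fixed subposets — with vertices K^H, X^H, L^H, Y^H and the restricted maps — is a pushout square in the category of partial orders and monotone maps. -/

import Mathlib

/-!
The order and the action on `Y` are checked case by case on `(L \ K) ⊔ X`. The `H`-fixed
points of `Y` are those of `L \ K` and of `X`, so a cocone `(u, v)` on the square of fixed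
points forces the map `Y^H → Z`. It remains to see that this map is monotone on a relation
`x ≤ y` with `x ∈ X^H` and `y ∈ L^H \ K`, whose witness `w ∈ K` (with `x ≤ f w`, `w ≤ y`) need
not be `H`-fixed. The Dwyer retraction replaces it by a fixed one: `y` lies in the cosieve `S`,
`r y` is `H`-fixed by equivariance, and `w ≤ r y ≤ y`, so
`v x ≤ v (f (r y)) = u (r y) ≤ u y`.
-/

universe u v w

/-- A sieve in a poset: a downward closed subset. -/
def IsSieve {α : Type*} [PartialOrder α] (A : Set α) : Prop :=
  ∀ ⦃x y : α⦄, x ≤ y → y ∈ A → x ∈ A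

/-- A cosieve in a poset: an upward closed subset. -/
def IsCosieve {α : Type*} [PartialOrder α] (A : Set α) : Prop :=
  ∀ ⦃x y : α⦄, x ≤ y → x ∈ A → y ∈ A

/-- The underlying type `(L \ K) ⊔ X` of the explicit pushout. -/
def PushY {L : Type u} (K : Set L) (X : Type v) : Type (max u v) :=
  {l : L // l ∉ K} ⊕ X

/-- The order relation on the explicit pushout. -/
def pushLE {L : Type u} [PartialOrder L] (K : Set L) {X : Type v} [PartialOrder X]
    (f : K → X) : PushY K X → PushY K X → Prop
  | Sum.inl y₁, Sum.inl y₂ => y₁.1 ≤ y₂.1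
  | Sum.inl _, Sum.inr _ => False
  | Sum.inr x, Sum.inl y => ∃ w : K, x ≤ f w ∧ (w : L) ≤ y.1
  | Sum.inr x₁, Sum.inr x₂ => x₁ ≤ x₂

open Classical in
/-- The map `g : L → Y`, given by `f` on `K` and the identity on `L \ K`. -/
noncomputable def pushG {L : Type u} (K : Set L) {X : Type v} (f : K → X) (l : L) :
    PushY K X :=
  if h : l ∈ K then Sum.inr (f ⟨l, h⟩) else Sum.inl ⟨l, h⟩

/-- The G-action on the explicit pushout induced by the actions on `L \ K`
(which is G-stable since `K` is) and on `X`. -/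
def pushSMul {G : Type*} [Group G] {L : Type u} {X : Type v}
    [MulAction G L] [MulAction G X] (K : Set L)
    (hKstab : ∀ (g : G) (l : L), l ∈ K → g • l ∈ K) (g : G) :
    PushY K X → PushY K X
  | Sum.inl y => Sum.inl ⟨g • y.1, fun h => y.2 (by
      have := hKstab g⁻¹ _ h
      simpa using this)⟩
  | Sum.inr x => Sum.inr (g • x)

section Action

variable {G : Type*} [Group G] {L : Type u} [MulAction G L] {X : Type v} [MulAction G X]
  {K : Set L} {hKstab : ∀ (g : G) (l : L), l ∈ K → g • l ∈ K}

theorem pushSMul_one (a : PushY K X) : pushSMul K hKstab (1 : G) a = a := by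
  cases a <;> simp [pushSMul, PushY]

theorem pushSMul_mul (g g' : G) (a : PushY K X) :
    pushSMul K hKstab (g * g') a = pushSMul K hKstab g (pushSMul K hKstab g' a) := by
  cases a <;> simp [pushSMul, PushY, mul_smul]

theorem pushSMul_inl_eq_self_iff {g : G} {y : {l : L // l ∉ K}} :
    pushSMul K hKstab g (Sum.inl y : PushY K X) = Sum.inl y ↔ g • y.1 = y.1 := by
  simp [pushSMul, PushY, Subtype.ext_iff]

theorem pushSMul_inr_eq_self_iff {g : G} {x : X} :
    pushSMul K hKstab g (Sum.inr x : PushY K X) = Sum.inr x ↔ g • x = x := by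
  simp [pushSMul, PushY]

theorem smul_eq_self_of_equivariant {S : Set L} (hSstab : ∀ (g : G) (l : L), l ∈ S → g • l ∈ S)
    (φ : S → X) (hφ : ∀ (g : G) (s : S), φ ⟨g • (s : L), hSstab g s s.2⟩ = g • φ s)
    {g : G} {s : S} (hs : g • (s : L) = s) : g • φ s = φ s := by
  rw [← hφ g s]
  exact congrArg φ (Subtype.ext hs)

end Action

section Order

variable {L : Type u} [PartialOrder L] {X : Type v} [PartialOrder X] {K : Set L} {f : K → X}

theorem pushLE_refl (a : PushY K X) : pushLE K f a a := by
  cases a with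
  | inl y => exact le_refl y.1
  | inr x => exact le_refl x

theorem pushLE_trans {a b c : PushY K X} (hab : pushLE K f a b) (hbc : pushLE K f b c) :
    pushLE K f a c := by
  match a, b, c, hab, hbc with
  | .inl _, .inl _, .inl _, hab, hbc => exact le_trans (α := L) hab hbc
  | .inr _, .inl _, .inl _, ⟨w, hxw, hwy⟩, hbc => exact ⟨w, hxw, le_trans hwy hbc⟩
  | .inr _, .inr _, .inl _, hab, ⟨w, hxw, hwy⟩ => exact ⟨w, le_trans (α := X) hab hxw, hwy⟩
  | .inr _, .inr _, .inr _, hab, hbc => exact le_trans (α := X) hab hbc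

theorem pushLE_antisymm {a b : PushY K X} (hab : pushLE K f a b) (hba : pushLE K f b a) :
    a = b := by
  match a, b, hab, hba with
  | .inl _, .inl _, hab, hba => exact congrArg Sum.inl (Subtype.ext (le_antisymm hab hba))
  | .inr _, .inr _, hab, hba => exact congrArg Sum.inr (le_antisymm hab hba)

theorem isPartialOrder_pushLE : IsPartialOrder (PushY K X) (pushLE K f) where
  refl := pushLE_refl
  trans _ _ _ := pushLE_trans
  antisymm _ _ := pushLE_antisymm

theorem pushLE_pushSMul {G : Type*} [Group G] [MulAction G L] [MulAction G X]
    {hKstab : ∀ (g : G) (l : L), l ∈ K → g • l ∈ K}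
    (hLact : ∀ g : G, Monotone fun l : L => g • l) (hXact : ∀ g : G, Monotone fun x : X => g • x)
    (hfeqv : ∀ (g : G) (w : K), f ⟨g • (w : L), hKstab g w w.2⟩ = g • f w)
    (g : G) {a b : PushY K X} (hab : pushLE K f a b) :
    pushLE K f (pushSMul K hKstab g a) (pushSMul K hKstab g b) := by
  match a, b, hab with
  | .inl _, .inl _, hab => exact hLact g hab
  | .inr _, .inl _, ⟨w, hxw, hwy⟩ =>
    exact ⟨⟨g • w.1, hKstab g w w.2⟩, (hfeqv g w).symm ▸ hXact g hxw, hLact g hwy⟩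
  | .inr _, .inr _, hab => exact hXact g hab

end Order

section Dwyer

variable {L : Type u} [PartialOrder L] {K S : Set L} (hKS : K ⊆ S) {r : S → K}

theorem le_retract_of_le (hr : Monotone r)
    (hrid : ∀ (k : L) (hk : k ∈ K), (r ⟨k, hKS hk⟩ : L) = k) {w : K} {s : S}
    (hws : (w : L) ≤ s) : w ≤ r s := by
  have hrw : r ⟨w, hKS w.2⟩ = w := Subtype.ext (hrid w w.2)
  exact hrw ▸ hr (show (⟨w, hKS w.2⟩ : S) ≤ s from hws)

theorem exists_fixed_between {G : Type*} [Group G] [MulAction G L] (hS : IsCosieve S)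
    (hSstab : ∀ (g : G) (l : L), l ∈ S → g • l ∈ S) (hr : Monotone r)
    (hrid : ∀ (k : L) (hk : k ∈ K), (r ⟨k, hKS hk⟩ : L) = k) (hrle : ∀ s : S, (r s : L) ≤ s)
    (hreqv : ∀ (g : G) (s : S), (r ⟨g • (s : L), hSstab g s s.2⟩ : L) = g • (r s : L))
    {H : Subgroup G} {w : K} {y : L} (hwy : (w : L) ≤ y) (hy : ∀ h : H, (h : G) • y = y) :
    ∃ k : K, (∀ h : H, (h : G) • (k : L) = k) ∧ w ≤ k ∧ (k : L) ≤ y := by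
  have hyS : y ∈ S := hS hwy (hKS w.2)
  refine ⟨r ⟨y, hyS⟩, fun h => ?_, le_retract_of_le hKS hr hrid hwy, hrle _⟩
  exact smul_eq_self_of_equivariant hSstab (fun s => (r s : L)) hreqv (s := ⟨y, hyS⟩) (hy h)

end Dwyer

section FixedPoints

variable {G : Type*} [Group G] {L : Type u} [MulAction G L] {X : Type v} [MulAction G X]
  {K : Set L} {hKstab : ∀ (g : G) (l : L), l ∈ K → g • l ∈ K} {f : K → X}
  {H : Subgroup G} {Z : Type w}
  (u : {l : L // ∀ h : H, (h : G) • l = l} → Z) (v : {x : X // ∀ h : H, (h : G) • x = x} → Z)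

theorem pushG_of_mem {l : L} (hl : l ∈ K) : pushG K f l = Sum.inr (f ⟨l, hl⟩) := dif_pos hl

theorem pushG_of_not_mem {l : L} (hl : l ∉ K) : pushG K f l = Sum.inl ⟨l, hl⟩ := dif_neg hl

def pushFixedDesc : {a : PushY K X // ∀ h : H, pushSMul K hKstab (h : G) a = a} → Z
  | ⟨.inl y, hy⟩ => u ⟨y.1, fun h => pushSMul_inl_eq_self_iff.1 (hy h)⟩
  | ⟨.inr x, hx⟩ => v ⟨x, fun h => pushSMul_inr_eq_self_iff.1 (hx h)⟩

theorem pushFixedDesc_inr (x : X) (hfixX : ∀ h : H, (h : G) • x = x)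
    (hfixY : ∀ h : H, pushSMul K hKstab (h : G) (Sum.inr x) = Sum.inr x) :
    pushFixedDesc u v ⟨Sum.inr x, hfixY⟩ = v ⟨x, hfixX⟩ :=
  rfl

theorem pushFixedDesc_pushG
    (huv : ∀ (k : L) (hk : k ∈ K) (hfixL : ∀ h : H, (h : G) • k = k)
      (hfixX : ∀ h : H, (h : G) • f ⟨k, hk⟩ = f ⟨k, hk⟩), u ⟨k, hfixL⟩ = v ⟨f ⟨k, hk⟩, hfixX⟩)
    (l : L) (hfixL : ∀ h : H, (h : G) • l = l)
    (hfixY : ∀ h : H, pushSMul K hKstab (h : G) (pushG K f l) = pushG K f l) :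
    pushFixedDesc u v ⟨pushG K f l, hfixY⟩ = u ⟨l, hfixL⟩ := by
  generalize hb : pushG K f l = b at hfixY
  by_cases hl : l ∈ K
  · rw [pushG_of_mem hl] at hb
    subst hb
    exact (huv l hl hfixL _).symm
  · rw [pushG_of_not_mem hl] at hb
    subst hb
    rfl

theorem eq_pushFixedDesc {t : {a : PushY K X // ∀ h : H, pushSMul K hKstab (h : G) a = a} → Z}
    (ht_pushG : ∀ (l : L) (hfixL : ∀ h : H, (h : G) • l = l)
      (hfixY : ∀ h : H, pushSMul K hKstab (h : G) (pushG K f l) = pushG K f l),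
      t ⟨pushG K f l, hfixY⟩ = u ⟨l, hfixL⟩)
    (ht_inr : ∀ (x : X) (hfixX : ∀ h : H, (h : G) • x = x)
      (hfixY : ∀ h : H, pushSMul K hKstab (h : G) (Sum.inr x) = Sum.inr x),
      t ⟨Sum.inr x, hfixY⟩ = v ⟨x, hfixX⟩) :
    t = pushFixedDesc u v := by
  funext ⟨a, ha⟩
  cases a with
  | inl y =>
    have hb : Sum.inl y = pushG K f y := (pushG_of_not_mem y.2).symm
    calc t ⟨.inl y, ha⟩ = t ⟨pushG K f y, hb ▸ ha⟩ := congrArg t (Subtype.ext hb)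
      _ = u ⟨y, fun h => pushSMul_inl_eq_self_iff.1 (ha h)⟩ := ht_pushG _ _ _
  | inr x => exact ht_inr x _ ha

theorem pushFixedDesc_monotone [PartialOrder L] [PartialOrder X] [Preorder Z]
    (hu : Monotone u) (hv : Monotone v)
    (huv : ∀ (k : L) (hk : k ∈ K) (hfixL : ∀ h : H, (h : G) • k = k)
      (hfixX : ∀ h : H, (h : G) • f ⟨k, hk⟩ = f ⟨k, hk⟩), u ⟨k, hfixL⟩ = v ⟨f ⟨k, hk⟩, hfixX⟩)
    (hf : Monotone f) (hfeqv : ∀ (g : G) (w : K), f ⟨g • (w : L), hKstab g w w.2⟩ = g • f w)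
    (hwit : ∀ (w : K) (y : L), (w : L) ≤ y → (∀ h : H, (h : G) • y = y) →
      ∃ k : K, (∀ h : H, (h : G) • (k : L) = k) ∧ w ≤ k ∧ (k : L) ≤ y)
    (a b : {a : PushY K X // ∀ h : H, pushSMul K hKstab (h : G) a = a})
    (hab : pushLE K f a.1 b.1) : pushFixedDesc u v a ≤ pushFixedDesc u v b := by
  match a, b, hab with
  | ⟨.inl _, _⟩, ⟨.inl _, _⟩, hab => exact hu hab
  | ⟨.inr x, hx⟩, ⟨.inl y, hy⟩, ⟨w, hxw, hwy⟩ =>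
    obtain ⟨k, hk, hwk, hky⟩ := hwit w y hwy fun h => pushSMul_inl_eq_self_iff.1 (hy h)
    have hfk : ∀ h : H, (h : G) • f k = f k :=
      fun h => smul_eq_self_of_equivariant hKstab f hfeqv (hk h)
    calc pushFixedDesc u v ⟨.inr x, hx⟩ ≤ v ⟨f k, hfk⟩ := hv (hxw.trans (hf hwk))
      _ = u ⟨k, hk⟩ := (huv k k.2 hk hfk).symm
      _ ≤ pushFixedDesc u v ⟨.inl y, hy⟩ := hu hky
  | ⟨.inr _, _⟩, ⟨.inr _, _⟩, hab => exact hv hab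

end FixedPoints

theorem statement3_general {G : Type*} [Group G]
    {L : Type u} [PartialOrder L] [MulAction G L]
    (hLact : ∀ g : G, Monotone fun l : L => g • l)
    {X : Type v} [PartialOrder X] [MulAction G X]
    (hXact : ∀ g : G, Monotone fun x : X => g • x)
    (K : Set L)
    (hKstab : ∀ (g : G) (l : L), l ∈ K → g • l ∈ K)
    -- the Dwyer G-map data for `j : K → L`: a G-stable cosieve `S ⊇ K` and an
    -- equivariant monotone retraction `r : S → K`
    (S : Set L) (hKS : K ⊆ S) (hS : IsCosieve S)
    (hSstab : ∀ (g : G) (l : L), l ∈ S → g • l ∈ S)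
    (r : S → K) (hr : Monotone r)
    (hrid : ∀ (k : L) (hk : k ∈ K), (r ⟨k, hKS hk⟩ : L) = k)
    (hrle : ∀ s : S, (r s : L) ≤ (s : L))
    (hreqv : ∀ (g : G) (s : S), (r ⟨g • (s : L), hSstab g s s.2⟩ : L) = g • (r s : L))
    -- `f : K → X` is an equivariant monotone map
    (f : K → X) (hf : Monotone f)
    (hfeqv : ∀ (g : G) (w : K), f ⟨g • (w : L), hKstab g w w.2⟩ = g • f w) :
    -- (a) `Y` is a G-poset: the relation is a partial order, `pushSMul` is a
    -- G-action, and `G` acts by monotone maps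
    IsPartialOrder (PushY K X) (pushLE K f) ∧
    (∀ a : PushY K X, pushSMul K hKstab (1 : G) a = a) ∧
    (∀ (g g' : G) (a : PushY K X),
      pushSMul K hKstab (g * g') a = pushSMul K hKstab g (pushSMul K hKstab g' a)) ∧
    (∀ (g : G) (a b : PushY K X),
      pushLE K f a b → pushLE K f (pushSMul K hKstab g a) (pushSMul K hKstab g b)) ∧
    -- (b) for every subgroup `H ≤ G`, the square of `H`-fixed subposets is a
    -- pushout square of posets
    (∀ (H : Subgroup G) (Z : Type w) [PartialOrder Z]
      (u : {l : L // ∀ h : H, (h : G) • l = l} → Z)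
      (v : {x : X // ∀ h : H, (h : G) • x = x} → Z),
      Monotone u → Monotone v →
      (∀ (k : L) (hk : k ∈ K) (hfixL : ∀ h : H, (h : G) • k = k)
        (hfixX : ∀ h : H, (h : G) • f ⟨k, hk⟩ = f ⟨k, hk⟩),
        u ⟨k, hfixL⟩ = v ⟨f ⟨k, hk⟩, hfixX⟩) →
      ∃! t : {a : PushY K X // ∀ h : H, pushSMul K hKstab (h : G) a = a} → Z,
        (∀ a b : {a : PushY K X // ∀ h : H, pushSMul K hKstab (h : G) a = a},
          pushLE K f a.1 b.1 → t a ≤ t b) ∧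
        (∀ (l : L) (hfixL : ∀ h : H, (h : G) • l = l)
          (hfixY : ∀ h : H, pushSMul K hKstab (h : G) (pushG K f l) = pushG K f l),
          t ⟨pushG K f l, hfixY⟩ = u ⟨l, hfixL⟩) ∧
        (∀ (x : X) (hfixX : ∀ h : H, (h : G) • x = x)
          (hfixY : ∀ h : H, pushSMul K hKstab (h : G) (Sum.inr x) = Sum.inr x),
          t ⟨Sum.inr x, hfixY⟩ = v ⟨x, hfixX⟩)) := by
  refine ⟨isPartialOrder_pushLE, pushSMul_one, pushSMul_mul,
    fun g _ _ => pushLE_pushSMul hLact hXact hfeqv g, ?_⟩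
  intro H Z _ u v hu hv huv
  have hwit := fun (w : K) (y : L) (hwy : (w : L) ≤ y) (hy : ∀ h : H, (h : G) • y = y) =>
    exists_fixed_between hKS hS hSstab hr hrid hrle hreqv hwy hy
  exact ⟨pushFixedDesc u v,
    ⟨pushFixedDesc_monotone u v hu hv huv hf hfeqv hwit, pushFixedDesc_pushG u v huv,
      pushFixedDesc_inr u v⟩,
    fun _ ⟨_, ht_pushG, ht_inr⟩ => eq_pushFixedDesc u v ht_pushG ht_inr⟩

theorem statement3 {G : Type*} [Group G]
    {L : Type u} [PartialOrder L] [MulAction G L]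
    (hLact : ∀ g : G, Monotone fun l : L => g • l)
    {X : Type v} [PartialOrder X] [MulAction G X]
    (hXact : ∀ g : G, Monotone fun x : X => g • x)
    (K : Set L) (hK : IsSieve K)
    (hKstab : ∀ (g : G) (l : L), l ∈ K → g • l ∈ K)
    -- the Dwyer G-map data for `j : K → L`: a G-stable cosieve `S ⊇ K` and an
    -- equivariant monotone retraction `r : S → K`
    (S : Set L) (hKS : K ⊆ S) (hS : IsCosieve S)
    (hSstab : ∀ (g : G) (l : L), l ∈ S → g • l ∈ S)
    (r : S → K) (hr : Monotone r)
    (hrid : ∀ (k : L) (hk : k ∈ K), (r ⟨k, hKS hk⟩ : L) = k)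
    (hrle : ∀ s : S, (r s : L) ≤ (s : L))
    (hreqv : ∀ (g : G) (s : S), (r ⟨g • (s : L), hSstab g s s.2⟩ : L) = g • (r s : L))
    -- `f : K → X` is an equivariant monotone map
    (f : K → X) (hf : Monotone f)
    (hfeqv : ∀ (g : G) (w : K), f ⟨g • (w : L), hKstab g w w.2⟩ = g • f w) :
    -- (a) `Y` is a G-poset: the relation is a partial order, `pushSMul` is a
    -- G-action, and `G` acts by monotone maps
    IsPartialOrder (PushY K X) (pushLE K f) ∧
    (∀ a : PushY K X, pushSMul K hKstab (1 : G) a = a) ∧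
    (∀ (g g' : G) (a : PushY K X),
      pushSMul K hKstab (g * g') a = pushSMul K hKstab g (pushSMul K hKstab g' a)) ∧
    (∀ (g : G) (a b : PushY K X),
      pushLE K f a b → pushLE K f (pushSMul K hKstab g a) (pushSMul K hKstab g b)) ∧
    -- (b) for every subgroup `H ≤ G`, the square of `H`-fixed subposets is a
    -- pushout square of posets
    (∀ (H : Subgroup G) (Z : Type w) [PartialOrder Z]
      (u : {l : L // ∀ h : H, (h : G) • l = l} → Z)
      (v : {x : X // ∀ h : H, (h : G) • x = x} → Z),
      Monotone u → Monotone v →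
      (∀ (k : L) (hk : k ∈ K) (hfixL : ∀ h : H, (h : G) • k = k)
        (hfixX : ∀ h : H, (h : G) • f ⟨k, hk⟩ = f ⟨k, hk⟩),
        u ⟨k, hfixL⟩ = v ⟨f ⟨k, hk⟩, hfixX⟩) →
      ∃! t : {a : PushY K X // ∀ h : H, pushSMul K hKstab (h : G) a = a} → Z,
        (∀ a b : {a : PushY K X // ∀ h : H, pushSMul K hKstab (h : G) a = a},
          pushLE K f a.1 b.1 → t a ≤ t b) ∧
        (∀ (l : L) (hfixL : ∀ h : H, (h : G) • l = l)
          (hfixY : ∀ h : H, pushSMul K hKstab (h : G) (pushG K f l) = pushG K f l),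
          t ⟨pushG K f l, hfixY⟩ = u ⟨l, hfixL⟩) ∧
        (∀ (x : X) (hfixX : ∀ h : H, (h : G) • x = x)
          (hfixY : ∀ h : H, pushSMul K hKstab (h : G) (Sum.inr x) = Sum.inr x),
          t ⟨Sum.inr x, hfixY⟩ = v ⟨x, hfixX⟩)) :=
  statement3_general hLact hXact K hKstab S hKS hS hSstab r hr hrid hrle hreqv f hf hfeqv
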